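/- Suppose R_Y ⫫ Y | (X, A) and R_{MY} ⫫ M | (X, A, Y). Then the ratio P(R_{MY} = 1 | X, A) / P(R_{MY} = 1 | X, A, M, Y) equals P(R_M = 1 | X, A, R_Y = 1) / P(R_M = 1 | X, A, Y, R_Y = 1), for all values making all conditioning events and denominators positive. -/

import Mathlib

/-! Write `C` for the event `(X, A) = (x, a)` and `R` for `R_M = R_Y = 1`. By the chain rule,
`P(R | C) = P(R_Y | C) · P(R_M | C, R_Y)` and `P(R | C, Y) = P(R_Y | C, Y) · P(R_M | C, Y, R_Y)`.
Under S2* the denominator `P(R | C, M, Y)` equals `P(R | C, Y)`, and `R_Y ⫫ Y | C` makes the two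
factors `P(R_Y | ·)` equal, so they cancel in the ratio. -/

open scoped Classical

noncomputable def Pr {Ω : Type*} [Fintype Ω] (p : Ω → ℝ) (E : Ω → Prop) : ℝ :=
  ∑ ω, if E ω then p ω else 0

noncomputable def cPr {Ω : Type*} [Fintype Ω] (p : Ω → ℝ) (E F : Ω → Prop) : ℝ :=
  Pr p (fun ω => E ω ∧ F ω) / Pr p F

noncomputable def odds {Ω : Type*} [Fintype Ω] (p : Ω → ℝ) (E F : Ω → Prop) : ℝ :=
  cPr p E F / cPr p (fun ω => ¬ E ω) F

section Pr

variable {Ω : Type*} [Fintype Ω] {p : Ω → ℝ}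

lemma Pr_congr {E F : Ω → Prop} (h : ∀ ω, E ω ↔ F ω) : Pr p E = Pr p F := by
  simp only [Pr, h]

lemma Pr_nonneg (hp : ∀ ω, 0 ≤ p ω) (E : Ω → Prop) : 0 ≤ Pr p E :=
  Finset.sum_nonneg fun ω _ => by split_ifs <;> simp [hp ω]

lemma Pr_mono (hp : ∀ ω, 0 ≤ p ω) {E F : Ω → Prop} (h : ∀ ω, E ω → F ω) :
    Pr p E ≤ Pr p F :=
  Finset.sum_le_sum fun ω _ => by
    by_cases hE : E ω
    · simp [hE, h ω hE]
    · by_cases hF : F ω <;> simp [hE, hF, hp ω]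

lemma cPr_pos (hp : ∀ ω, 0 ≤ p ω) {E F : Ω → Prop} (h : 0 < Pr p (fun ω => E ω ∧ F ω)) :
    0 < cPr p E F :=
  div_pos h (h.trans_le (Pr_mono hp fun _ => And.right))

lemma cPr_and_eq_mul (hp : ∀ ω, 0 ≤ p ω) (E G F : Ω → Prop) :
    cPr p (fun ω => E ω ∧ G ω) F = cPr p G F * cPr p E (fun ω => F ω ∧ G ω) := by
  have hGF : Pr p (fun ω => G ω ∧ F ω) = Pr p (fun ω => F ω ∧ G ω) := Pr_congr fun _ => and_comm
  have hEGF : Pr p (fun ω => (E ω ∧ G ω) ∧ F ω) = Pr p (fun ω => E ω ∧ F ω ∧ G ω) :=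
    Pr_congr fun _ => by tauto
  unfold cPr
  rw [hGF, hEGF]
  by_cases h : Pr p (fun ω => F ω ∧ G ω) = 0
  · have hE : Pr p (fun ω => E ω ∧ F ω ∧ G ω) = 0 :=
      le_antisymm (h ▸ Pr_mono hp fun _ => And.right) (Pr_nonneg hp _)
    simp [h, hE]
  · field_simp

end Pr

theorem S2_star_tilting_identification_general
    {Ω 𝒳 𝒜 ℳ 𝒴 : Type*} [Fintype Ω]
    (p : Ω → ℝ) (hp : ∀ ω, 0 ≤ p ω)
    (X : Ω → 𝒳) (A : Ω → 𝒜) (M : Ω → ℳ) (Y : Ω → 𝒴) (RM RY : Ω → ℕ)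
    -- R_Y ⫫ Y ∣ (X, A)
    (h1 : ∀ (ry : ℕ) (y : 𝒴) (x : 𝒳) (a : 𝒜),
      0 < Pr p (fun ω => Y ω = y ∧ X ω = x ∧ A ω = a) →
      cPr p (fun ω => RY ω = ry) (fun ω => Y ω = y ∧ X ω = x ∧ A ω = a)
        = cPr p (fun ω => RY ω = ry) (fun ω => X ω = x ∧ A ω = a))
    -- R_{MY} ⫫ M ∣ (X, A, Y), where R_{MY} = R_M · R_Y
    (h2 : ∀ (r : ℕ) (m : ℳ) (x : 𝒳) (a : 𝒜) (y : 𝒴),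
      0 < Pr p (fun ω => M ω = m ∧ X ω = x ∧ A ω = a ∧ Y ω = y) →
      cPr p (fun ω => RM ω * RY ω = r) (fun ω => M ω = m ∧ X ω = x ∧ A ω = a ∧ Y ω = y)
        = cPr p (fun ω => RM ω * RY ω = r) (fun ω => X ω = x ∧ A ω = a ∧ Y ω = y)) :
    ∀ (x : 𝒳) (a : 𝒜) (m : ℳ) (y : 𝒴),
      0 < Pr p (fun ω => X ω = x ∧ A ω = a ∧ M ω = m ∧ Y ω = y) →
      0 < Pr p (fun ω => X ω = x ∧ A ω = a ∧ RY ω = 1) →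
      0 < Pr p (fun ω => X ω = x ∧ A ω = a ∧ Y ω = y ∧ RY ω = 1) →
      0 < cPr p (fun ω => RM ω = 1 ∧ RY ω = 1)
            (fun ω => X ω = x ∧ A ω = a ∧ M ω = m ∧ Y ω = y) →
      0 < cPr p (fun ω => RM ω = 1) (fun ω => X ω = x ∧ A ω = a ∧ Y ω = y ∧ RY ω = 1) →
      cPr p (fun ω => RM ω = 1 ∧ RY ω = 1) (fun ω => X ω = x ∧ A ω = a)
          / cPr p (fun ω => RM ω = 1 ∧ RY ω = 1)
              (fun ω => X ω = x ∧ A ω = a ∧ M ω = m ∧ Y ω = y)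
        = cPr p (fun ω => RM ω = 1) (fun ω => X ω = x ∧ A ω = a ∧ RY ω = 1)
          / cPr p (fun ω => RM ω = 1) (fun ω => X ω = x ∧ A ω = a ∧ Y ω = y ∧ RY ω = 1) := by
  intro x a m y hXAMY hXARY _ _ _
  have hM : cPr p (fun ω => RM ω = 1 ∧ RY ω = 1) (fun ω => X ω = x ∧ A ω = a ∧ M ω = m ∧ Y ω = y)
      = cPr p (fun ω => RM ω = 1 ∧ RY ω = 1) (fun ω => X ω = x ∧ A ω = a ∧ Y ω = y) := by
    have := h2 1 m x a y (hXAMY.trans_le (Pr_mono hp fun _ => by tauto))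
    simpa only [mul_eq_one, and_comm, and_left_comm, and_assoc] using this
  have hY : cPr p (fun ω => RY ω = 1) (fun ω => X ω = x ∧ A ω = a ∧ Y ω = y)
      = cPr p (fun ω => RY ω = 1) (fun ω => X ω = x ∧ A ω = a) := by
    have := h1 1 y x a (hXAMY.trans_le (Pr_mono hp fun _ => by tauto))
    simpa only [and_comm, and_left_comm, and_assoc] using this
  have hRY : cPr p (fun ω => RY ω = 1) (fun ω => X ω = x ∧ A ω = a) ≠ 0 :=
    (cPr_pos hp (hXARY.trans_le (Pr_mono hp fun _ => by tauto))).ne'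
  rw [hM, cPr_and_eq_mul hp, cPr_and_eq_mul hp, hY, mul_div_mul_left _ _ hRY]
  simp only [and_assoc]

/-- Identification of the combined tilting function `g_b` under assumption S2*. -/
theorem S2_star_tilting_identification
    {Ω 𝒳 𝒜 ℳ 𝒴 : Type*} [Fintype Ω]
    (p : Ω → ℝ) (hp : ∀ ω, 0 ≤ p ω) (hsum : ∑ ω, p ω = 1)
    (X : Ω → 𝒳) (A : Ω → 𝒜) (M : Ω → ℳ) (Y : Ω → 𝒴) (RM RY : Ω → ℕ)
    (hRM : ∀ ω, RM ω = 0 ∨ RM ω = 1) (hRY : ∀ ω, RY ω = 0 ∨ RY ω = 1)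
    -- R_Y ⫫ Y ∣ (X, A)
    (h1 : ∀ (ry : ℕ) (y : 𝒴) (x : 𝒳) (a : 𝒜),
      0 < Pr p (fun ω => Y ω = y ∧ X ω = x ∧ A ω = a) →
      cPr p (fun ω => RY ω = ry) (fun ω => Y ω = y ∧ X ω = x ∧ A ω = a)
        = cPr p (fun ω => RY ω = ry) (fun ω => X ω = x ∧ A ω = a))
    -- R_{MY} ⫫ M ∣ (X, A, Y), where R_{MY} = R_M · R_Y
    (h2 : ∀ (r : ℕ) (m : ℳ) (x : 𝒳) (a : 𝒜) (y : 𝒴),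
      0 < Pr p (fun ω => M ω = m ∧ X ω = x ∧ A ω = a ∧ Y ω = y) →
      cPr p (fun ω => RM ω * RY ω = r) (fun ω => M ω = m ∧ X ω = x ∧ A ω = a ∧ Y ω = y)
        = cPr p (fun ω => RM ω * RY ω = r) (fun ω => X ω = x ∧ A ω = a ∧ Y ω = y)) :
    ∀ (x : 𝒳) (a : 𝒜) (m : ℳ) (y : 𝒴),
      0 < Pr p (fun ω => X ω = x ∧ A ω = a ∧ M ω = m ∧ Y ω = y) →
      0 < Pr p (fun ω => X ω = x ∧ A ω = a ∧ RY ω = 1) →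
      0 < Pr p (fun ω => X ω = x ∧ A ω = a ∧ Y ω = y ∧ RY ω = 1) →
      0 < cPr p (fun ω => RM ω = 1 ∧ RY ω = 1)
            (fun ω => X ω = x ∧ A ω = a ∧ M ω = m ∧ Y ω = y) →
      0 < cPr p (fun ω => RM ω = 1) (fun ω => X ω = x ∧ A ω = a ∧ Y ω = y ∧ RY ω = 1) →
      cPr p (fun ω => RM ω = 1 ∧ RY ω = 1) (fun ω => X ω = x ∧ A ω = a)
          / cPr p (fun ω => RM ω = 1 ∧ RY ω = 1)
              (fun ω => X ω = x ∧ A ω = a ∧ M ω = m ∧ Y ω = y)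
        = cPr p (fun ω => RM ω = 1) (fun ω => X ω = x ∧ A ω = a ∧ RY ω = 1)
          / cPr p (fun ω => RM ω = 1) (fun ω => X ω = x ∧ A ω = a ∧ Y ω = y ∧ RY ω = 1) :=
  S2_star_tilting_identification_general p hp X A M Y RM RY h1 h2
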